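/- (Theorem 2, claim (ii): lower bound on the complexity of selected structures.) Assume Conditions (A1), (A2) and (A3), and assume κ ≥ ν/α. Fix δ ∈ (0,1) and τ₀ > ((1+δ)/(1−δ))·3(1+κα)/α, and let I_* = I_*(θ) be a minimizer over I ∈ 𝓘 of ‖θ − P_I θ‖² + τ₀σ²ρ(I). Then for every θ ∈ Θ and every M ≥ 0, E_θ[ Σ_{ I ∈ 𝓘 : ρ(I) ≤ δρ(I_*) − M } p̂_I ] ≤ C_ν e^{−(τ₀α/3) M}. -/

import Mathlib

open MeasureTheory Real

/-- The orthogonal projection onto a linear subspace of `ℝ^N`, as a map `ℝ^N → ℝ^N`. -/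
noncomputable def proj {N : ℕ} (K : Submodule ℝ (EuclideanSpace ℝ (Fin N))) :
    EuclideanSpace ℝ (Fin N) →L[ℝ] EuclideanSpace ℝ (Fin N) :=
  K.subtypeL.comp (K.orthogonalProjection)

/-!
Fix `θ` and, by (A3), let `J(I)` be a structure whose space contains `L_I` and `L_{I_*}`, with
`ρ(J) ≤ ρ(I) + ρ(I_*)`. Both DDM weights satisfy `p̂_I ≤ (w_I / w_J)^α` for the unnormalized
weights `w`. Because `L_J ⊇ L_{I_*}`, the oracle inequality makes the bias removed by passing from
`L_I` to `L_J` at least `τ₀σ²(ρ(I_*) − ρ(I))`, and at the data `Y` the residual drops by at least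
two thirds of that, up to the noise term `2σ²‖P_J ξ‖²`. Hence
`p̂_I ≤ e^{ακρ(I_*) − (ατ₀/3)(ρ(I_*) − ρ(I))} e^{α‖P_J ξ‖²}`, whose expectation is bounded through
(A1) and `d_J ≤ ρ(I) + ρ(I_*)`. When `ρ(I) ≤ δρ(I_*) − M`, the choice of `τ₀` turns this into
`e^{−νρ(I)} e^{−(τ₀α/3)M}`, and (A2) sums these bounds.
-/

open scoped RealInnerProductSpace ENNReal

section Projection

variable {E : Type*} [NormedAddCommGroup E] [InnerProductSpace ℝ E]
  {K K' : Submodule ℝ E} [K.HasOrthogonalProjection] [K'.HasOrthogonalProjection]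

theorem sq_norm_sub_starProjection_eq_of_le (h : K ≤ K') (y : E) :
    ‖y - K.starProjection y‖ ^ 2 =
      ‖y - K'.starProjection y‖ ^ 2 + ‖K'.starProjection y - K.starProjection y‖ ^ 2 := by
  have hperp : ⟪y - K'.starProjection y, K'.starProjection y - K.starProjection y⟫ = 0 :=
    (K'.mem_orthogonal' _).1 (K'.sub_starProjection_mem_orthogonal y) _
      (sub_mem (K'.starProjection_apply_mem y) (h (K.starProjection_apply_mem y)))
  have hsplit : y - K.starProjection y =
      (y - K'.starProjection y) + (K'.starProjection y - K.starProjection y) := by abel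
  rw [hsplit, norm_add_sq_real, hperp]
  ring

theorem norm_starProjection_sub_starProjection_le (h : K ≤ K') (x : E) :
    ‖K'.starProjection x - K.starProjection x‖ ≤ ‖K'.starProjection x‖ := by
  have hcomp : K.starProjection (K'.starProjection x) = K.starProjection x :=
    congrArg (fun P : E →L[ℝ] E => P x) (K.starProjection_comp_starProjection_of_le h)
  rw [← hcomp, ← Submodule.starProjection_orthogonal_val]
  exact Kᗮ.norm_starProjection_apply_le _

theorem mul_sub_le_sq_norm_starProjection_sub_of_oracle {K₀ : Submodule ℝ E}
    [K₀.HasOrthogonalProjection] (h : K ≤ K') (h₀ : K₀ ≤ K') {θ : E} {c r p : ℝ}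
    (horacle : ‖θ - K₀.starProjection θ‖ ^ 2 + c * r ≤ ‖θ - K.starProjection θ‖ ^ 2 + c * p) :
    c * (r - p) ≤ ‖K'.starProjection θ - K.starProjection θ‖ ^ 2 := by
  have hK := sq_norm_sub_starProjection_eq_of_le h θ
  have hK₀ := sq_norm_sub_starProjection_eq_of_le h₀ θ
  linarith [sq_nonneg ‖K'.starProjection θ - K₀.starProjection θ‖]

theorem residual_gain_ge (h : K ≤ K') (θ y : E) :
    2 / 3 * ‖K'.starProjection θ - K.starProjection θ‖ ^ 2 - 2 * ‖K'.starProjection (y - θ)‖ ^ 2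
      ≤ ‖y - K.starProjection y‖ ^ 2 - ‖y - K'.starProjection y‖ ^ 2 := by
  set Q := ‖K'.starProjection y - K.starProjection y‖
  set V := ‖K'.starProjection θ - K.starProjection θ‖
  set W := ‖K'.starProjection (y - θ) - K.starProjection (y - θ)‖
  have htri : V ≤ Q + W := by
    have hθ : K'.starProjection θ - K.starProjection θ =
        (K'.starProjection y - K.starProjection y) -
          (K'.starProjection (y - θ) - K.starProjection (y - θ)) := by
      simp only [map_sub]; abel
    simp only [V, Q, W, hθ]
    exact norm_sub_le _ _
  have hW := norm_starProjection_sub_starProjection_le h (y - θ)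
  have hV : 0 ≤ V := norm_nonneg _
  have hW₀ : 0 ≤ W := norm_nonneg _
  rw [sq_norm_sub_starProjection_eq_of_le h y]
  -- `V² ≤ (Q + W)² ≤ 3/2 Q² + 3 W²`
  nlinarith [sq_nonneg (Q - 2 * W)]

theorem log_weight_ratio_le {K₀ : Submodule ℝ E} [K₀.HasOrthogonalProjection]
    (h : K ≤ K') (h₀ : K₀ ≤ K') {θ : E} {σ κ τ₀ r p p' : ℝ} (hσ : 0 < σ) (hκ : 0 ≤ κ)
    (hp' : p' ≤ p + r)
    (horacle : ‖θ - K₀.starProjection θ‖ ^ 2 + τ₀ * σ ^ 2 * r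
      ≤ ‖θ - K.starProjection θ‖ ^ 2 + τ₀ * σ ^ 2 * p) (y : E) :
    κ * (p' - p) + (‖y - K'.starProjection y‖ ^ 2 - ‖y - K.starProjection y‖ ^ 2) / (2 * σ ^ 2)
      ≤ κ * r - τ₀ / 3 * (r - p) + ‖K'.starProjection (σ⁻¹ • (y - θ))‖ ^ 2 := by
  have hgap := mul_sub_le_sq_norm_starProjection_sub_of_oracle h h₀ horacle
  have hgain := residual_gain_ge h θ y
  have hscale : σ ^ 2 * ‖K'.starProjection (σ⁻¹ • (y - θ))‖ ^ 2 =
      ‖K'.starProjection (y - θ)‖ ^ 2 := by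
    rw [map_smul, norm_smul, mul_pow, norm_inv, Real.norm_of_nonneg hσ.le, ← mul_assoc,
      inv_pow, mul_inv_cancel₀ (by positivity), one_mul]
  have hres : (‖y - K'.starProjection y‖ ^ 2 - ‖y - K.starProjection y‖ ^ 2) / (2 * σ ^ 2)
      ≤ ‖K'.starProjection (σ⁻¹ • (y - θ))‖ ^ 2 - τ₀ / 3 * (r - p) := by
    rw [div_le_iff₀ (by positivity)]
    linarith
  have hκr : κ * (p' - p) ≤ κ * r := mul_le_mul_of_nonneg_left (by linarith) hκ
  linarith

end Projection

theorem exp_div_tsum_exp_le {ι : Type*} {g : ι → ℝ} (hg : Summable fun k => exp (g k))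
    {α : ℝ} (hα0 : 0 ≤ α) (hα1 : α ≤ 1) (i j : ι) :
    exp (g i) / ∑' k, exp (g k) ≤ exp (α * (g i - g j)) := by
  have hle : ∀ k, exp (g k) ≤ ∑' k, exp (g k) :=
    fun k => hg.le_tsum k fun k _ => (exp_pos (g k)).le
  rcases le_or_gt (g i - g j) 0 with hij | hij
  · calc exp (g i) / ∑' k, exp (g k) ≤ exp (g i) / exp (g j) :=
          div_le_div_of_nonneg_left (exp_pos _).le (exp_pos _) (hle j)
      _ = exp (g i - g j) := (exp_sub _ _).symm
      _ ≤ exp (α * (g i - g j)) := exp_le_exp.2 (by nlinarith)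
  · calc exp (g i) / ∑' k, exp (g k) ≤ 1 := div_le_one_of_le₀ (hle i) ((exp_pos _).le.trans (hle i))
      _ ≤ exp (α * (g i - g j)) := one_le_exp (mul_nonneg hα0 hij.le)

theorem ddm_weight_le {N : ℕ} {ι : Type*} [DecidableEq ι]
    {L : ι → Submodule ℝ (EuclideanSpace ℝ (Fin N))} {ρ : ι → ℝ} (hρ0 : ∀ i, 0 ≤ ρ i)
    {σ : ℝ} (hσ : 0 < σ) {α ν κ : ℝ} (hα0 : 0 ≤ α) (hα1 : α ≤ 1) (hνκ : ν ≤ κ)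
    (hsum : Summable fun i : ι => exp (-ν * ρ i))
    {Ihat : EuclideanSpace ℝ (Fin N) → ι}
    (hIhat : ∀ y i, ‖y - proj (L (Ihat y)) y‖ ^ 2 + 2 * κ * σ ^ 2 * ρ (Ihat y)
      ≤ ‖y - proj (L i) y‖ ^ 2 + 2 * κ * σ ^ 2 * ρ i)
    {phat : ι → EuclideanSpace ℝ (Fin N) → ℝ}
    (hphat :
      (∀ i y, phat i y =
          exp (-κ * ρ i) * exp (-‖y - proj (L i) y‖ ^ 2 / (2 * σ ^ 2)) /
            ∑' j : ι, exp (-κ * ρ j) * exp (-‖y - proj (L j) y‖ ^ 2 / (2 * σ ^ 2))) ∨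
        (∀ i y, phat i y = if Ihat y = i then 1 else 0))
    (i j : ι) (y : EuclideanSpace ℝ (Fin N)) :
    phat i y ≤ exp (α * (κ * (ρ j - ρ i) +
      (‖y - proj (L j) y‖ ^ 2 - ‖y - proj (L i) y‖ ^ 2) / (2 * σ ^ 2))) := by
  set R : ι → ℝ := fun k => ‖y - proj (L k) y‖ ^ 2
  rcases hphat with hMA | hMS
  · have hsum' : Summable fun k => exp (-κ * ρ k + -R k / (2 * σ ^ 2)) := by
      refine hsum.of_nonneg_of_le (fun k => (exp_pos _).le) fun k => exp_le_exp.2 ?_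
      have hνρ : ν * ρ k ≤ κ * ρ k := mul_le_mul_of_nonneg_right hνκ (hρ0 k)
      have hR : 0 ≤ R k / (2 * σ ^ 2) := by positivity
      rw [neg_div]
      linarith
    rw [hMA]
    simp_rw [← exp_add]
    refine (exp_div_tsum_exp_le hsum' hα0 hα1 i j).trans_eq ?_
    congr 2
    ring
  · rw [hMS]
    split_ifs with hi
    · subst hi
      have hmin : 0 ≤ (R j + 2 * κ * σ ^ 2 * ρ j - (R (Ihat y) + 2 * κ * σ ^ 2 * ρ (Ihat y)))
          / (2 * σ ^ 2) := div_nonneg (sub_nonneg.2 (hIhat y j)) (by positivity)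
      refine one_le_exp (mul_nonneg hα0 (hmin.trans_eq ?_))
      field_simp
      ring
    · exact (exp_pos _).le

theorem lintegral_tsum_le_tsum_mul {Ω ι : Type*} [MeasurableSpace Ω] [Countable ι]
    {μ : Measure Ω} {f G : ι → Ω → ℝ≥0∞} {c D : ι → ℝ≥0∞} (hG : ∀ i, AEMeasurable (G i) μ)
    (hfG : ∀ i x, f i x ≤ c i * G i x) (hGD : ∀ i, ∫⁻ x, G i x ∂μ ≤ D i) :
    ∫⁻ x, ∑' i, f i x ∂μ ≤ ∑' i, c i * D i :=
  calc ∫⁻ x, ∑' i, f i x ∂μ ≤ ∫⁻ x, ∑' i, c i * G i x ∂μ :=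
        lintegral_mono fun x => ENNReal.tsum_le_tsum fun i => hfG i x
    _ = ∑' i, c i * ∫⁻ x, G i x ∂μ := by
        rw [lintegral_tsum fun i => (hG i).const_mul _]
        simp_rw [lintegral_const_mul'' _ (hG _)]
    _ ≤ ∑' i, c i * D i := ENNReal.tsum_le_tsum fun i => by gcongr; exact hGD i

theorem tsum_ofReal_mul_le_ofReal_mul {ι : Type*} {w : ι → ℝ} (hw0 : ∀ i, 0 ≤ w i)
    (hw : Summable w) {C a : ℝ} (hC : ∑' i, w i ≤ C) (ha : 0 ≤ a) :
    ∑' i, ENNReal.ofReal (w i) * ENNReal.ofReal a ≤ ENNReal.ofReal (C * a) := by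
  rw [ENNReal.tsum_mul_right, ← ENNReal.ofReal_tsum_of_nonneg hw0 hw, ← ENNReal.ofReal_mul' ha]
  gcongr

theorem complexity_exponent_le {α ν κ δ τ₀ r p M d : ℝ} (hα : 0 < α) (hν : 0 ≤ ν)
    (hνκα : ν ≤ κ * α) (hδ0 : 0 ≤ δ) (hδ1 : δ < 1)
    (hτ₀ : (1 + δ) / (1 - δ) * (3 * (1 + κ * α) / α) < τ₀)
    (hr : 0 ≤ r) (hM : 0 ≤ M) (hp : p ≤ δ * r - M) (hd : d ≤ p + r) :
    α * (κ * r - τ₀ / 3 * (r - p)) + d ≤ -ν * p + -(τ₀ * α / 3) * M := by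
  have h1δ : 0 < 1 - δ := by linarith
  have hκα : 0 ≤ κ * α := hν.trans hνκα
  have hkey : 3 * (1 + δ) * (1 + κ * α) < τ₀ * ((1 - δ) * α) := by
    rw [← div_lt_iff₀ (by positivity)]
    calc 3 * (1 + δ) * (1 + κ * α) / ((1 - δ) * α)
        = (1 + δ) / (1 - δ) * (3 * (1 + κ * α) / α) := by field_simp
      _ < τ₀ := hτ₀
  have hτ : 0 < τ₀ :=
    pos_of_mul_pos_left ((by positivity : (0 : ℝ) < 3 * (1 + δ) * (1 + κ * α)).trans hkey)
      (by positivity)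
  have hc : 0 ≤ α * τ₀ / 3 + 1 + ν := by positivity
  nlinarith [mul_le_mul_of_nonneg_left hp hc, mul_le_mul_of_nonneg_left hkey.le hr,
    mul_nonneg (mul_nonneg hr hδ0) (sub_nonneg.2 hνκα)]

theorem structure_ddm_complexity_lower_bound_general
    {N : ℕ} {ι : Type*} [Countable ι] [DecidableEq ι]
    -- the family of linear subspaces expressing the structures
    (L : ι → Submodule ℝ (EuclideanSpace ℝ (Fin N)))
    -- the parameter set and the data distributions, with mean `θ`
    (Θ : Set (EuclideanSpace ℝ (Fin N)))
    (Pθ : EuclideanSpace ℝ (Fin N) → Measure (EuclideanSpace ℝ (Fin N)))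
    (σ : ℝ) (hσ : 0 < σ)
    -- Condition (A1), with `ξ = σ⁻¹(Y − θ)`
    (α : ℝ) (hα0 : 0 < α) (hα1 : α ≤ 1)
    (d : ι → ℝ)
    (hA1 : ∀ θ ∈ Θ, ∀ i : ι,
      ∫⁻ y, ENNReal.ofReal (exp (α * ‖proj (L i) (σ⁻¹ • (y - θ))‖ ^ 2)) ∂(Pθ θ)
        ≤ ENNReal.ofReal (exp (d i)))
    -- Condition (A2)
    (ν Cν : ℝ) (hν : 0 < ν)
    (ρ : ι → ℝ) (hρ0 : ∀ i, 0 ≤ ρ i)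
    (hA2sum : Summable fun i : ι => exp (-ν * ρ i))
    (hA2 : ∑' i : ι, exp (-ν * ρ i) ≤ Cν)
    (hρd : ∀ i, d i ≤ ρ i)
    -- the DDM tuning parameter
    (κ : ℝ)
    -- the structure selector `Î` (a minimizer of the penalized criterion)
    (Ihat : EuclideanSpace ℝ (Fin N) → ι)
    (hIhat : ∀ y i, ‖y - proj (L (Ihat y)) y‖ ^ 2 + 2 * κ * σ ^ 2 * ρ (Ihat y)
      ≤ ‖y - proj (L i) y‖ ^ 2 + 2 * κ * σ ^ 2 * ρ i)
    -- the structure DDM weights: either `π̃(I|Y)` (MA) or `π̌(I|Y) = 1{I = Î}` (MS)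
    (phat : ι → EuclideanSpace ℝ (Fin N) → ℝ)
    (hphat :
      (∀ i y, phat i y =
          exp (-κ * ρ i) * exp (-‖y - proj (L i) y‖ ^ 2 / (2 * σ ^ 2)) /
            ∑' j : ι, exp (-κ * ρ j) * exp (-‖y - proj (L j) y‖ ^ 2 / (2 * σ ^ 2))) ∨
        (∀ i y, phat i y = if Ihat y = i then 1 else 0))
    -- `κ ≥ ν/α`
    (hκ2 : ν / α ≤ κ)
    -- Condition (A3)
    (hA3 : ∀ i₀ i₁ : ι, ∃ i' : ι,
      (L i₀ : Set (EuclideanSpace ℝ (Fin N))) ∪ (L i₁ : Set (EuclideanSpace ℝ (Fin N)))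
        ⊆ (L i' : Set (EuclideanSpace ℝ (Fin N))) ∧ ρ i' ≤ ρ i₀ + ρ i₁)
    -- the `τ₀`-oracle `I_*(θ)`, minimizing `I ↦ ‖θ − P_I θ‖² + τ₀σ²ρ(I)`
    (δ : ℝ) (hδ0 : 0 < δ) (hδ1 : δ < 1)
    (τ₀ : ℝ) (hτ₀ : (1 + δ) / (1 - δ) * (3 * (1 + κ * α) / α) < τ₀)
    (Istar : EuclideanSpace ℝ (Fin N) → ι)
    (hIstar : ∀ θ i, ‖θ - proj (L (Istar θ)) θ‖ ^ 2 + τ₀ * σ ^ 2 * ρ (Istar θ)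
      ≤ ‖θ - proj (L i) θ‖ ^ 2 + τ₀ * σ ^ 2 * ρ i) :
    ∀ θ ∈ Θ, ∀ M : ℝ, 0 ≤ M →
      -- `E_θ[ Σ_{I ∈ 𝓘 : ρ(I) ≤ δρ(I_*) − M} p̂_I ]`
      ∫⁻ y, (∑' i : ι,
          if ρ i ≤ δ * ρ (Istar θ) - M then ENNReal.ofReal (phat i y) else 0) ∂(Pθ θ)
        ≤ ENNReal.ofReal (Cν * exp (-(τ₀ * α / 3) * M)) := by
  intro θ hθ M hM
  have hνκα : ν ≤ κ * α := (div_le_iff₀ hα0).1 hκ2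
  have hκ0 : 0 ≤ κ := nonneg_of_mul_nonneg_left (hν.le.trans hνκα) hα0
  have hνκ : ν ≤ κ := hνκα.trans (mul_le_of_le_one_right hκ0 hα1)
  set r := ρ (Istar θ)
  have hjoin : ∀ i, ∃ j, L i ≤ L j ∧ L (Istar θ) ≤ L j ∧ ρ j ≤ ρ i + r := fun i => by
    obtain ⟨j, hsub, hρj⟩ := hA3 i (Istar θ)
    rw [Set.union_subset_iff] at hsub
    exact ⟨j, SetLike.coe_subset_coe.1 hsub.1, SetLike.coe_subset_coe.1 hsub.2, hρj⟩
  choose J hLJ hLstarJ hρJ using hjoin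
  have hweight : ∀ i y, phat i y ≤ exp (α * (κ * r - τ₀ / 3 * (r - ρ i))) *
      exp (α * ‖proj (L (J i)) (σ⁻¹ • (y - θ))‖ ^ 2) := fun i y => by
    have hratio := ddm_weight_le hρ0 hσ hα0.le hα1 hνκ hA2sum hIhat hphat i (J i) y
    have hexponent := log_weight_ratio_le (hLJ i) (hLstarJ i) hσ hκ0 (hρJ i) (hIstar θ i) y
    rw [← exp_add, ← mul_add]
    exact hratio.trans (exp_le_exp.2 (mul_le_mul_of_nonneg_left hexponent hα0.le))
  calc ∫⁻ y, (∑' i : ι,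
          if ρ i ≤ δ * ρ (Istar θ) - M then ENNReal.ofReal (phat i y) else 0) ∂(Pθ θ)
      ≤ ∑' i, (if ρ i ≤ δ * r - M then ENNReal.ofReal (exp (α * (κ * r - τ₀ / 3 * (r - ρ i))))
          else 0) * ENNReal.ofReal (exp (d (J i))) := by
        refine lintegral_tsum_le_tsum_mul (fun i => by fun_prop) (fun i y => ?_)
          fun i => hA1 θ hθ (J i)
        split_ifs
        · rw [← ENNReal.ofReal_mul (exp_pos _).le]
          exact ENNReal.ofReal_le_ofReal (hweight i y)
        · simp
    _ ≤ ∑' i, ENNReal.ofReal (exp (-ν * ρ i)) * ENNReal.ofReal (exp (-(τ₀ * α / 3) * M)) := by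
        refine ENNReal.tsum_le_tsum fun i => ?_
        split_ifs with hi
        · rw [← ENNReal.ofReal_mul (exp_pos _).le, ← ENNReal.ofReal_mul (exp_pos _).le,
            ← exp_add, ← exp_add]
          exact ENNReal.ofReal_le_ofReal (exp_le_exp.2 (complexity_exponent_le hα0 hν.le hνκα
            hδ0.le hδ1 hτ₀ (hρ0 _) hM hi ((hρd (J i)).trans (hρJ i))))
        · simp
    _ ≤ ENNReal.ofReal (Cν * exp (-(τ₀ * α / 3) * M)) :=
        tsum_ofReal_mul_le_ofReal_mul (fun i => (exp_pos _).le) hA2sum hA2 (exp_pos _).le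

/-- **Theorem 2, claim (ii)**: lower bound on the complexity of selected structures. Under
Conditions (A1), (A2), (A3) and `κ ≥ ν/α`, with `I_*` the `τ₀`-oracle, for every `θ ∈ Θ` and
`M ≥ 0`, `E_θ[ Σ_{I : ρ(I) ≤ δρ(I_*) − M} p̂_I ] ≤ C_ν e^{−(τ₀α/3) M}`. -/
theorem structure_ddm_complexity_lower_bound
    {N : ℕ} {ι : Type*} [Countable ι] [DecidableEq ι]
    -- the family of linear subspaces expressing the structures
    (L : ι → Submodule ℝ (EuclideanSpace ℝ (Fin N)))
    -- the parameter set and the data distributions, with mean `θ`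
    (Θ : Set (EuclideanSpace ℝ (Fin N)))
    (Pθ : EuclideanSpace ℝ (Fin N) → Measure (EuclideanSpace ℝ (Fin N)))
    (hP : ∀ θ ∈ Θ, IsProbabilityMeasure (Pθ θ))
    (σ : ℝ) (hσ : 0 < σ)
    (hmean : ∀ θ ∈ Θ, ∫ y, y ∂(Pθ θ) = θ)
    -- Condition (A1), with `ξ = σ⁻¹(Y − θ)`
    (α : ℝ) (hα0 : 0 < α) (hα1 : α ≤ 1)
    (d : ι → ℝ) (hd0 : ∀ i, 0 ≤ d i)
    (hA1 : ∀ θ ∈ Θ, ∀ i : ι,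
      ∫⁻ y, ENNReal.ofReal (exp (α * ‖proj (L i) (σ⁻¹ • (y - θ))‖ ^ 2)) ∂(Pθ θ)
        ≤ ENNReal.ofReal (exp (d i)))
    -- Condition (A2)
    (ν Cν : ℝ) (hν : 0 < ν) (hCν : 0 < Cν)
    (ρ : ι → ℝ) (hρ0 : ∀ i, 0 ≤ ρ i)
    (hA2sum : Summable fun i : ι => exp (-ν * ρ i))
    (hA2 : ∑' i : ι, exp (-ν * ρ i) ≤ Cν)
    (hρd : ∀ i, d i ≤ ρ i)
    -- the DDM tuning parameter
    (κ : ℝ) (hκ : (32 * ν + 10 + α) / (4 * α) < κ)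
    -- the structure selector `Î` (a minimizer of the penalized criterion)
    (Ihat : EuclideanSpace ℝ (Fin N) → ι)
    (hIhat : ∀ y i, ‖y - proj (L (Ihat y)) y‖ ^ 2 + 2 * κ * σ ^ 2 * ρ (Ihat y)
      ≤ ‖y - proj (L i) y‖ ^ 2 + 2 * κ * σ ^ 2 * ρ i)
    -- the structure DDM weights: either `π̃(I|Y)` (MA) or `π̌(I|Y) = 1{I = Î}` (MS)
    (phat : ι → EuclideanSpace ℝ (Fin N) → ℝ)
    (hphat :
      (∀ i y, phat i y =
          exp (-κ * ρ i) * exp (-‖y - proj (L i) y‖ ^ 2 / (2 * σ ^ 2)) /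
            ∑' j : ι, exp (-κ * ρ j) * exp (-‖y - proj (L j) y‖ ^ 2 / (2 * σ ^ 2))) ∨
        (∀ i y, phat i y = if Ihat y = i then 1 else 0))
    -- `κ ≥ ν/α`
    (hκ2 : ν / α ≤ κ)
    -- Condition (A3)
    (hA3 : ∀ i₀ i₁ : ι, ∃ i' : ι,
      (L i₀ : Set (EuclideanSpace ℝ (Fin N))) ∪ (L i₁ : Set (EuclideanSpace ℝ (Fin N)))
        ⊆ (L i' : Set (EuclideanSpace ℝ (Fin N))) ∧ ρ i' ≤ ρ i₀ + ρ i₁)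
    -- the `τ₀`-oracle `I_*(θ)`, minimizing `I ↦ ‖θ − P_I θ‖² + τ₀σ²ρ(I)`
    (δ : ℝ) (hδ0 : 0 < δ) (hδ1 : δ < 1)
    (τ₀ : ℝ) (hτ₀ : (1 + δ) / (1 - δ) * (3 * (1 + κ * α) / α) < τ₀)
    (Istar : EuclideanSpace ℝ (Fin N) → ι)
    (hIstar : ∀ θ i, ‖θ - proj (L (Istar θ)) θ‖ ^ 2 + τ₀ * σ ^ 2 * ρ (Istar θ)
      ≤ ‖θ - proj (L i) θ‖ ^ 2 + τ₀ * σ ^ 2 * ρ i) :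
    ∀ θ ∈ Θ, ∀ M : ℝ, 0 ≤ M →
      -- `E_θ[ Σ_{I ∈ 𝓘 : ρ(I) ≤ δρ(I_*) − M} p̂_I ]`
      ∫⁻ y, (∑' i : ι,
          if ρ i ≤ δ * ρ (Istar θ) - M then ENNReal.ofReal (phat i y) else 0) ∂(Pθ θ)
        ≤ ENNReal.ofReal (Cν * exp (-(τ₀ * α / 3) * M)) :=
  structure_ddm_complexity_lower_bound_general L Θ Pθ σ hσ α hα0 hα1 d hA1 ν Cν hν ρ hρ0 hA2sum hA2
    hρd κ Ihat hIhat phat hphat hκ2 hA3 δ hδ0 hδ1 τ₀ hτ₀ Istar hIstar
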